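/- (Quantum Neyman–Pearson Lemma) Let ν, ω be positive definite matrices on a finite dimensional Hilbert space, viewed as positive linear functionals A ↦ Tr(νA), Tr(ωA). Then the minimal error D(ν,ω) = inf over orthogonal projections T of [Tr(νT) + Tr(ω(1−T))] is attained at T = s_{(ω−ν)_+}, the support projection of the positive part of ω−ν, and equals (1/2)(Tr ω + Tr ν − Tr|ω−ν|). -/

import Mathlib

open scoped ComplexOrder

/-- Functional calculus for Hermitian matrices (junk value `0` off the Hermitian matrices). -/
noncomputable def cfcM {d : ℕ} (f : ℝ → ℝ) (A : Matrix (Fin d) (Fin d) ℂ) :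
    Matrix (Fin d) (Fin d) ℂ :=
  if h : A.IsHermitian then
    (h.eigenvectorUnitary : Matrix (Fin d) (Fin d) ℂ) *
      Matrix.diagonal (fun i => (f (h.eigenvalues i) : ℂ)) *
      (star (h.eigenvectorUnitary : Matrix (Fin d) (Fin d) ℂ))
  else 0

/-- Absolute value of a Hermitian matrix via functional calculus. -/
noncomputable def matAbs {d : ℕ} (A : Matrix (Fin d) (Fin d) ℂ) :
    Matrix (Fin d) (Fin d) ℂ := cfcM (fun x => |x|) A

/-- Support projection of the positive part of a Hermitian matrix. -/
noncomputable def suppPosM {d : ℕ} (A : Matrix (Fin d) (Fin d) ℂ) :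
    Matrix (Fin d) (Fin d) ℂ := cfcM (fun x => if 0 < x then 1 else 0) A

/-- Total error probability of the test `T` for the pair `(ν, ω)`:
`D(ν,ω,T) = Tr(νT) + Tr(ω(1−T))`. -/
noncomputable def testErr {d : ℕ} (ν ω T : Matrix (Fin d) (Fin d) ℂ) : ℝ :=
  ((ν * T).trace + (ω * (1 - T)).trace).re

/-! Put `Δ = ω - ν`. The error of a test `T` is `Tr ω - Re Tr (Δ T)`. In an eigenbasis of `Δ`,
`Re Tr (Δ T) = ∑ λᵢ Tᵢᵢ`, and the diagonal entries of a projection lie in `[0, 1]`, so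
`Re Tr (Δ T) ≤ ∑ max λᵢ 0`, with equality for the projection onto the positive eigenvectors,
`s_{Δ₊}`. Finally `∑ max λᵢ 0 = (Tr Δ + Tr |Δ|) / 2`. -/

open Matrix

section
variable {𝕜 n : Type*} [RCLike 𝕜] [Fintype n] [DecidableEq n]

open scoped MatrixOrder in
theorem IsStarProjection.re_diag_mem_Icc {S : Matrix n n 𝕜} (hS : IsStarProjection S) (i : n) :
    RCLike.re (S i i) ∈ Set.Icc 0 1 := by
  have h0 : 0 ≤ S i i := (nonneg_iff_posSemidef.mp hS.nonneg).diag_nonneg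
  have h1 : 0 ≤ (1 - S) i i := (nonneg_iff_posSemidef.mp hS.one_sub_nonneg).diag_nonneg
  rw [Matrix.sub_apply, one_apply_eq, sub_nonneg] at h1
  exact ⟨(RCLike.nonneg_iff.mp h0).1, by simpa using RCLike.re_le_re h1⟩

namespace Matrix.IsHermitian

variable {A : Matrix n n 𝕜} (hA : A.IsHermitian)

theorem trace_cfc (f : ℝ → ℝ) : (cfc f A).trace = ∑ i, (f (hA.eigenvalues i) : 𝕜) := by
  rw [hA.cfc_eq, IsHermitian.cfc, Unitary.conjStarAlgAut_apply, trace_mul_cycle,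
    Unitary.coe_star_mul_self, one_mul, trace_diagonal]
  rfl

theorem trace_mul_cfc (f : ℝ → ℝ) :
    (A * cfc f A).trace = ∑ i, ((hA.eigenvalues i * f (hA.eigenvalues i) : ℝ) : 𝕜) := by
  have hcont (g : ℝ → ℝ) : ContinuousOn g (spectrum ℝ A) :=
    (hA.spectrum_real_eq_range_eigenvalues ▸ Set.finite_range _).continuousOn g
  nth_rw 1 [← cfc_id' ℝ A]
  rw [← cfc_mul _ _ A (hcont _) (hcont _), hA.trace_cfc]

theorem re_trace_mul_le_sum_max_eigenvalues {T : Matrix n n 𝕜} (hT : IsStarProjection T) :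
    RCLike.re (A * T).trace ≤ ∑ i, max (hA.eigenvalues i) 0 := by
  set U := hA.eigenvectorUnitary
  set S := Unitary.conjStarAlgAut 𝕜 _ (star U) T
  have hS : IsStarProjection S := hT.map _
  have htrace : (A * T).trace = (diagonal (RCLike.ofReal ∘ hA.eigenvalues) * S).trace := by
    conv_lhs => rw [hA.spectral_theorem]
    simp only [S, Unitary.conjStarAlgAut_apply, Unitary.coe_star, star_star, Matrix.mul_assoc]
    rw [trace_mul_comm, Matrix.mul_assoc, Matrix.mul_assoc]
  rw [htrace, trace, map_sum]
  refine Finset.sum_le_sum fun i _ => ?_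
  obtain ⟨h0, h1⟩ := hS.re_diag_mem_Icc i
  rw [diag_apply, diagonal_mul, Function.comp_apply, RCLike.re_ofReal_mul]
  rcases le_total (hA.eigenvalues i) 0 with hneg | hpos
  · exact (mul_nonpos_of_nonpos_of_nonneg hneg h0).trans (le_max_right _ _)
  · exact (mul_le_of_le_one_right hpos h1).trans (le_max_left _ _)

end Matrix.IsHermitian

end

section
variable {d : ℕ} {A : Matrix (Fin d) (Fin d) ℂ}

theorem cfcM_eq_cfc (f : ℝ → ℝ) (hA : A.IsHermitian) : cfcM f A = cfc f A := by
  rw [cfcM, dif_pos hA, hA.cfc_eq, IsHermitian.cfc, Unitary.conjStarAlgAut_apply]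
  rfl

theorem re_trace_mul_suppPosM (hA : A.IsHermitian) :
    (A * suppPosM A).trace.re = ∑ i, max (hA.eigenvalues i) 0 := by
  rw [suppPosM, cfcM_eq_cfc _ hA, hA.trace_mul_cfc, Complex.re_sum]
  refine Finset.sum_congr rfl fun i _ => ?_
  simp only [Complex.coe_algebraMap, Complex.ofReal_re]
  split_ifs with h
  · rw [mul_one, max_eq_left h.le]
  · rw [mul_zero, max_eq_right (not_lt.mp h)]

theorem sum_max_eigenvalues_eq_half_trace_add_trace_matAbs (hA : A.IsHermitian) :
    ∑ i, max (hA.eigenvalues i) 0 = (A.trace.re + (matAbs A).trace.re) / 2 := by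
  rw [matAbs, cfcM_eq_cfc _ hA, hA.trace_cfc, hA.trace_eq_sum_eigenvalues, Complex.re_sum,
    Complex.re_sum, ← Finset.sum_add_distrib, Finset.sum_div]
  refine Finset.sum_congr rfl fun i _ => ?_
  simp only [Complex.coe_algebraMap, Complex.ofReal_re]
  rcases le_total 0 (hA.eigenvalues i) with h | h
  · rw [abs_of_nonneg h, max_eq_left h]; ring
  · rw [abs_of_nonpos h, max_eq_right h]; ring

end

theorem testErr_eq_sub {d : ℕ} (ν ω T : Matrix (Fin d) (Fin d) ℂ) :
    testErr ν ω T = ω.trace.re - ((ω - ν) * T).trace.re := by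
  simp only [testErr, Matrix.mul_sub, Matrix.mul_one, Matrix.sub_mul, trace_sub, Complex.add_re,
    Complex.sub_re]
  ring

/-- Quantum Neyman–Pearson Lemma: the minimal error `inf_T [Tr(νT) + Tr(ω(1−T))]` over
orthogonal projections `T` is attained at `T = s_{(ω−ν)_+}` and equals
`(1/2)(Tr ω + Tr ν − Tr|ω−ν|)`. -/
theorem quantum_neyman_pearson {d : ℕ}
    (ν ω : Matrix (Fin d) (Fin d) ℂ) (hν : ν.PosDef) (hω : ω.PosDef) :
    (∀ T : Matrix (Fin d) (Fin d) ℂ, T.IsHermitian → T * T = T →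
        (1 / 2 : ℝ) * ((ω.trace).re + (ν.trace).re - ((matAbs (ω - ν)).trace).re)
          ≤ testErr ν ω T) ∧
    testErr ν ω (suppPosM (ω - ν))
      = (1 / 2 : ℝ) * ((ω.trace).re + (ν.trace).re - ((matAbs (ω - ν)).trace).re) := by
  have hΔ : (ω - ν).IsHermitian := hω.1.sub hν.1
  have hsum := sum_max_eigenvalues_eq_half_trace_add_trace_matAbs hΔ
  have htrace : (ω - ν).trace.re = ω.trace.re - ν.trace.re := by
    rw [trace_sub, Complex.sub_re]
  refine ⟨fun T hT hT2 => ?_, ?_⟩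
  · have hle := hΔ.re_trace_mul_le_sum_max_eigenvalues ⟨hT2, hT⟩
    rw [RCLike.re_to_complex] at hle
    rw [testErr_eq_sub]
    linarith
  · rw [testErr_eq_sub, re_trace_mul_suppPosM hΔ]
    linarith
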